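/- arXiv:2003.12038 — 2 statements merged into one kernel-verified Lean document; each statement's English description precedes it below -/
import Mathlib

section
/- For every q ∈ (0,1) and every γ ∈ [0,1], the set G⁻_γ(q) := {ψ ∈ 𝓗 : D⁻_{μ_ψ}(q) ≤ γ} is a Gδ subset of 𝓗 (a countable intersection of open sets). -/
open MeasureTheory Filter Set Topology ENNReal

noncomputable section

/-- `I_μ(q, ε) = ∫ μ(B(x,ε))^{q-1} dμ(x)`, integrated over `{x : μ(B(x,ε)) > 0}`. -/
def fracIntegral (μ : Measure ℝ) (q ε : ℝ) : ℝ≥0∞ :=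
  ∫⁻ x in {x : ℝ | 0 < μ (Ioo (x - ε) (x + ε))}, μ (Ioo (x - ε) (x + ε)) ^ (q - 1) ∂μ

/-- lower q-generalized fractal dimension. -/
def Dlower (μ : Measure ℝ) (q : ℝ) : ℝ :=
  liminf (fun ε : ℝ => Real.log (fracIntegral μ q ε).toReal / ((q - 1) * Real.log ε)) (𝓝[>] 0)

/-- upper q-generalized fractal dimension. -/
def Dupper (μ : Measure ℝ) (q : ℝ) : ℝ :=
  limsup (fun ε : ℝ => Real.log (fracIntegral μ q ε).toReal / ((q - 1) * Real.log ε)) (𝓝[>] 0)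

/-- index set of the hydrogen orbitals. -/
structure HIndex where
  n : ℕ
  l : ℕ
  m : ℤ
  hn : 1 ≤ n
  hl : l < n
  hm : -(l : ℤ) ≤ m ∧ m ≤ (l : ℤ)

instance : Fact ((1 : ℝ≥0∞) ≤ 2) := ⟨one_le_two⟩

/-- the bound-state space -/
abbrev Hspace := lp (fun _ : HIndex => ℂ) 2

/-- eigenvalues of the hydrogen Hamiltonian -/
def lam (Λ : ℝ) (n : ℕ) : ℝ := -Λ / (n : ℝ) ^ 2

/-- spectral measure of a bound state -/
def specMeasure (Λ : ℝ) (ψ : Hspace) : Measure ℝ :=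
  Measure.sum fun i : HIndex =>
    ENNReal.ofReal (‖ψ i‖ ^ 2) • Measure.dirac (lam Λ i.n)

/-! The set is `⋂ₖ {ψ : I_ψ(q, ε) < ε ^ ((q - 1) (γ + 1/(k+1))) for arbitrarily small ε > 0}`, so
it is `G_δ` as soon as each `ψ ↦ I_ψ(q, ε)` is upper semicontinuous; since `μ_ψ` lives on
`[-Λ, 0]`, `I_ψ(q, ε) = O(1/ε)`, so the quotients defining `D⁻` are bounded above and the real
`liminf` is not a junk value. Upper semicontinuity holds because `I_ψ(q, ε)` is the infimum of
continuous upper bounds: keep the levels `n ≤ N` exactly and merge the levels `n > N`, whose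
eigenvalues lie within `ε` of each other once `Λ / (N+1)² ≤ ε`, into a single atom. Merging atoms
that close together can only increase `I`, and the error vanishes as `N → ∞`. -/

namespace ENNReal

theorem rpow_le_rpow_of_nonpos {x y : ℝ≥0∞} {z : ℝ} (hz : z ≤ 0) (hxy : x ≤ y) :
    y ^ z ≤ x ^ z := by
  rw [← neg_neg z, rpow_neg y, rpow_neg x]
  exact ENNReal.inv_le_inv.mpr (rpow_le_rpow hxy (neg_nonneg.mpr hz))

theorem mul_rpow_sub_one_le {x : ℝ≥0∞} {q : ℝ} (hq : 0 < q) : x * x ^ (q - 1) ≤ x ^ q := by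
  rcases eq_or_ne x 0 with rfl | hx₀
  · simp [zero_rpow_of_pos hq]
  rcases eq_or_ne x ⊤ with rfl | hx_top
  · simp [top_rpow_of_pos hq]
  have h := rpow_add 1 (q - 1) hx₀ hx_top
  rw [rpow_one, add_sub_cancel] at h
  exact h.ge

theorem mul_rpow_eq_ofReal {a b : ℝ≥0∞} (hab : a ≤ b) (hb : b ≠ ⊤) (c : ℝ) :
    a * b ^ c = ENNReal.ofReal (a.toReal * b.toReal ^ c) := by
  rcases eq_or_ne a 0 with rfl | ha
  · simp
  have hb₀ : 0 < b.toReal := toReal_pos (ne_bot_of_le_ne_bot ha hab) hb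
  rw [ofReal_mul toReal_nonneg, ofReal_toReal (ne_top_of_le_ne_top hb hab),
    ← ofReal_rpow_of_pos hb₀, ofReal_toReal hb]

end ENNReal

theorem Real.continuous_mul_rpow_of_le {X : Type*} [TopologicalSpace X] {f g : X → ℝ}
    (hf : Continuous f) (hg : Continuous g) (hf₀ : ∀ x, 0 ≤ f x) (hfg : ∀ x, f x ≤ g x)
    {c : ℝ} (hc : -1 < c) : Continuous fun x => f x * g x ^ c := by
  refine continuous_iff_continuousAt.mpr fun x => ?_
  rcases (hf₀ x |>.trans (hfg x)).lt_or_eq with hgx | hgx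
  · exact hf.continuousAt.mul
      ((Real.continuousAt_rpow_const _ _ (Or.inl hgx.ne')).comp hg.continuousAt)
  -- where `g` vanishes, `0 ≤ f * g ^ c ≤ g ^ (1 + c) → 0`
  have hbound : ∀ y, f y * g y ^ c ≤ g y ^ (1 + c) := fun y => by
    rcases (hf₀ y).eq_or_lt with hfy | hfy
    · rw [← hfy, zero_mul]; exact Real.rpow_nonneg (hf₀ y |>.trans (hfg y)) _
    · rw [Real.rpow_add (hfy.trans_le (hfg y)), Real.rpow_one]
      exact mul_le_mul_of_nonneg_right (hfg y) (Real.rpow_nonneg (hf₀ y |>.trans (hfg y)) _)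
  have hlim : Tendsto (fun y => g y ^ (1 + c)) (𝓝 x) (𝓝 0) := by
    simpa [Function.comp_def, ← hgx, Real.zero_rpow (by linarith : 1 + c ≠ 0)] using
      ((Real.continuous_rpow_const (q := 1 + c) (by linarith)).comp hg).tendsto x
  have hfx : f x = 0 := le_antisymm (hgx ▸ hfg x) (hf₀ x)
  show Tendsto _ _ (𝓝 (f x * g x ^ c))
  rw [hfx, zero_mul]
  exact squeeze_zero (fun y => mul_nonneg (hf₀ y) (Real.rpow_nonneg (hf₀ y |>.trans (hfg y)) c))
      hbound hlim

theorem ENNReal.continuous_mul_rpow_of_le {X : Type*} [TopologicalSpace X] {f g : X → ℝ≥0∞}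
    (hf : Continuous f) (hg : Continuous g) (hfg : ∀ x, f x ≤ g x) (hg_top : ∀ x, g x ≠ ⊤)
    {c : ℝ} (hc : -1 < c) : Continuous fun x => f x * g x ^ c := by
  have hf_top x : f x ≠ ⊤ := ne_top_of_le_ne_top (hg_top x) (hfg x)
  have hf' : Continuous fun x => (f x).toReal :=
    ENNReal.continuousOn_toReal.comp_continuous hf hf_top
  have hg' : Continuous fun x => (g x).toReal :=
    ENNReal.continuousOn_toReal.comp_continuous hg hg_top
  simp_rw [mul_rpow_eq_ofReal (hfg _) (hg_top _)]
  exact continuous_ofReal.comp (Real.continuous_mul_rpow_of_le hf' hg' (fun _ => toReal_nonneg)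
    (fun x => toReal_mono (hg_top x) (hfg x)) hc)

theorem Real.liminf_le_iff_of_nonneg {ι : Type*} {l : Filter ι} [l.NeBot] {u : ι → ℝ} {γ : ℝ}
    (hγ : 0 ≤ γ) (hu : IsBoundedUnder (· ≤ ·) l u) :
    liminf u l ≤ γ ↔ ∀ c > γ, ∃ᶠ i in l, u i < c := by
  by_cases hb : IsBoundedUnder (· ≥ ·) l u
  · exact liminf_le_iff hu.isCoboundedUnder_flip hb
  -- otherwise the `liminf` is the junk value `0`
  rw [Real.liminf_of_not_isBoundedUnder hb]
  refine iff_of_true hγ fun c _ => ?_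
  by_contra h
  exact hb (isBoundedUnder_of_eventually_ge ((not_frequently.mp h).mono fun _ => le_of_not_gt))

theorem isGδ_setOf_frequently {X ι : Type*} [TopologicalSpace X] {l : Filter ι}
    [l.IsCountablyGenerated] {p : X → ι → Prop} (hp : ∀ᶠ i in l, IsOpen {x | p x i}) :
    IsGδ {x | ∃ᶠ i in l, p x i} := by
  obtain ⟨s, hs⟩ := l.exists_antitone_basis
  have hset : {x | ∃ᶠ i in l, p x i} = ⋂ n, ⋃ i ∈ s n ∩ {i | IsOpen {x | p x i}}, {x | p x i} := by
    ext x
    simp only [mem_iInter, mem_iUnion, exists_prop]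
    refine ⟨fun h n => ?_, fun h => ?_⟩
    · obtain ⟨i, hi, hpi, hO⟩ := hs.toHasBasis.frequently_iff.mp (h.and_eventually hp) n trivial
      exact ⟨i, ⟨hi, hO⟩, hpi⟩
    · exact hs.toHasBasis.frequently_iff.mpr fun n _ =>
        let ⟨i, hi, hpi⟩ := h n
        ⟨i, hi.1, hpi⟩
  rw [hset]
  exact .iInter fun n => (isOpen_biUnion fun i hi => hi.2).isGδ

theorem isGδ_setOf_liminf_le {X ι : Type*} [TopologicalSpace X] {l : Filter ι} [l.NeBot]
    [l.IsCountablyGenerated] {u : X → ι → ℝ} {γ : ℝ} (hγ : 0 ≤ γ)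
    (hu : ∀ x, IsBoundedUnder (· ≤ ·) l (u x)) (hopen : ∀ c > γ, ∀ᶠ i in l, IsOpen {x | u x i < c}) :
    IsGδ {x | liminf (u x) l ≤ γ} := by
  have hset : {x | liminf (u x) l ≤ γ} = ⋂ k : ℕ, {x | ∃ᶠ i in l, u x i < γ + 1 / (k + 1)} := by
    ext x
    simp only [mem_ofPred_eq, mem_iInter, Real.liminf_le_iff_of_nonneg hγ (hu x)]
    refine ⟨fun h k => h _ (by simp; positivity), fun h c hc => ?_⟩
    obtain ⟨k, hk⟩ := exists_nat_one_div_lt (sub_pos.mpr hc)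
    exact (h k).mono fun i hi => by linarith
  rw [hset]
  exact .iInter fun k => isGδ_setOf_frequently (hopen _ (by simp; positivity))

theorem isOpen_setOf_log_toReal_div_lt {X : Type*} [TopologicalSpace X] {F : X → ℝ≥0∞}
    (hF : UpperSemicontinuous F) (hF_top : ∀ x, F x ≠ ⊤) {c d : ℝ} (hc : 0 < c) (hd : 0 < d) :
    IsOpen {x | Real.log (F x).toReal / d < c} := by
  convert hF.isOpen_preimage (ENNReal.ofReal (Real.exp (c * d))) using 1
  ext x
  rw [mem_ofPred_eq, mem_preimage, mem_Iio, div_lt_iff₀ hd,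
    ENNReal.lt_ofReal_iff_toReal_lt (hF_top x)]
  rcases toReal_nonneg.eq_or_lt with h | h
  · rw [← h, Real.log_zero]
    exact iff_of_true (mul_pos hc hd) (Real.exp_pos _)
  · exact Real.log_lt_iff_lt_exp h

theorem isBoundedUnder_le_log_toReal_div {F : ℝ → ℝ≥0∞} {q C : ℝ} (hq : q < 1)
    (hF : ∀ᶠ ε in 𝓝[>] 0, (F ε).toReal ≤ C / ε) :
    IsBoundedUnder (· ≤ ·) (𝓝[>] 0) fun ε => Real.log (F ε).toReal / ((q - 1) * Real.log ε) := by
  have hsmall : ∀ᶠ ε in 𝓝 (0 : ℝ), ε < 1 ∧ C * ε < 1 :=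
    (eventually_lt_nhds one_pos).and
      (((continuous_const_mul C).tendsto' 0 0 (mul_zero C)).eventually (eventually_lt_nhds one_pos))
  refine isBoundedUnder_of_eventually_le (a := 2 / (1 - q)) ?_
  filter_upwards [hF, self_mem_nhdsWithin, nhdsWithin_le_nhds hsmall]
    with ε hFε (hε₀ : 0 < ε) ⟨hε₁, hCε⟩
  have hlog : Real.log ε < 0 := Real.log_neg hε₀ hε₁
  have hFlog : Real.log (F ε).toReal ≤ -2 * Real.log ε := by
    rcases toReal_nonneg.eq_or_lt with h | h
    · rw [← h, Real.log_zero]; linarith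
    calc Real.log (F ε).toReal ≤ Real.log (ε ^ 2)⁻¹ := by
          refine Real.log_le_log h (hFε.trans ?_)
          rw [div_le_iff₀ hε₀, pow_two, mul_inv, inv_mul_cancel_right₀ hε₀.ne', ← one_div,
            le_div_iff₀ hε₀]
          exact hCε.le
      _ = -2 * Real.log ε := by rw [Real.log_inv, Real.log_pow]; push_cast; ring
  rw [div_le_iff₀ (mul_pos_of_neg_of_neg (by linarith) hlog)]
  calc Real.log (F ε).toReal ≤ -2 * Real.log ε := hFlog
    _ = 2 / (1 - q) * ((q - 1) * Real.log ε) := by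
      field_simp [(by linarith : (1 : ℝ) - q ≠ 0)]
      ring

def fracQuotient (μ : Measure ℝ) (q ε : ℝ) : ℝ :=
  Real.log (fracIntegral μ q ε).toReal / ((q - 1) * Real.log ε)

theorem fracIntegral_le_of_measure_compl_Icc {μ : Measure ℝ} {a b q ε : ℝ} (hq₀ : 0 < q)
    (hq₁ : q ≤ 1) (hε : 0 < ε) (hμ : μ (Icc a b)ᶜ = 0) :
    fracIntegral μ q ε ≤ (⌊(b - a) / ε⌋₊ + 1) * μ univ ^ q := by
  set K := ⌊(b - a) / ε⌋₊
  set S := {x : ℝ | 0 < μ (Ioo (x - ε) (x + ε))}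
  -- cut `[a, b]` into `K + 1` intervals of length `ε`; each lies in the `ε`-ball around its points
  set J : Fin (K + 1) → Set ℝ := fun k => Ico (a + k * ε) (a + (k + 1) * ε)
  have hcover : Icc a b ⊆ ⋃ k, J k := fun x ⟨hax, hxb⟩ => by
    have hk : ⌊(x - a) / ε⌋₊ < K + 1 :=
      Nat.lt_succ_of_le (Nat.floor_le_floor (by gcongr))
    refine mem_iUnion.mpr ⟨⟨_, hk⟩, ?_, ?_⟩
    · have := Nat.floor_le (div_nonneg (sub_nonneg.mpr hax) hε.le)
      rw [le_div_iff₀ hε] at this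
      dsimp only; linarith
    · have := Nat.lt_floor_add_one ((x - a) / ε)
      rw [div_lt_iff₀ hε] at this
      dsimp only; linarith
  have hball (k) (x) (hx : x ∈ J k) : J k ⊆ Ioo (x - ε) (x + ε) := fun y hy => by
    simp only [J, mem_Ico] at hx hy
    constructor <;> linarith
  have hpiece (k) : ∫⁻ x in S ∩ J k, μ (Ioo (x - ε) (x + ε)) ^ (q - 1) ∂μ ≤ μ univ ^ q :=
    calc ∫⁻ x in S ∩ J k, μ (Ioo (x - ε) (x + ε)) ^ (q - 1) ∂μ
        ≤ ∫⁻ _ in S ∩ J k, μ (J k) ^ (q - 1) ∂μ := setLIntegral_mono measurable_const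
          fun x hx => rpow_le_rpow_of_nonpos (by linarith) (measure_mono (hball k x hx.2))
      _ = μ (J k) ^ (q - 1) * μ (S ∩ J k) := setLIntegral_const _ _
      _ ≤ μ (J k) * μ (J k) ^ (q - 1) := by
          rw [mul_comm]; gcongr; exact inter_subset_right
      _ ≤ μ (J k) ^ q := mul_rpow_sub_one_le hq₀
      _ ≤ μ univ ^ q := rpow_le_rpow (measure_mono (subset_univ _)) hq₀.le
  have hae : S ≤ᵐ[μ] ⋃ k, S ∩ J k := by
    filter_upwards [mem_ae_iff.mpr hμ] with x hx hxS
    obtain ⟨k, hk⟩ := mem_iUnion.mp (hcover hx)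
    exact mem_iUnion.mpr ⟨k, hxS, hk⟩
  calc fracIntegral μ q ε
      ≤ ∫⁻ x in ⋃ k, S ∩ J k, μ (Ioo (x - ε) (x + ε)) ^ (q - 1) ∂μ := lintegral_mono_set' hae
    _ ≤ ∑' k, ∫⁻ x in S ∩ J k, μ (Ioo (x - ε) (x + ε)) ^ (q - 1) ∂μ := lintegral_iUnion_le _ _
    _ ≤ ∑' _ : Fin (K + 1), μ univ ^ q := ENNReal.tsum_le_tsum hpiece
    _ = (K + 1) * μ univ ^ q := by simp [tsum_fintype]

theorem fracIntegral_ne_top {μ : Measure ℝ} [IsFiniteMeasure μ] {a b q ε : ℝ} (hq₀ : 0 < q)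
    (hq₁ : q ≤ 1) (hε : 0 < ε) (hμ : μ (Icc a b)ᶜ = 0) : fracIntegral μ q ε ≠ ⊤ :=
  ne_top_of_le_ne_top (mul_ne_top (by simp) (rpow_ne_top_of_nonneg hq₀.le (measure_ne_top μ _)))
    (fracIntegral_le_of_measure_compl_Icc hq₀ hq₁ hε hμ)

theorem isBoundedUnder_le_fracQuotient {μ : Measure ℝ} [IsFiniteMeasure μ] {a b q : ℝ}
    (hq₀ : 0 < q) (hq₁ : q < 1) (hμ : μ (Icc a b)ᶜ = 0) :
    IsBoundedUnder (· ≤ ·) (𝓝[>] 0) (fracQuotient μ q) := by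
  set M := (μ univ ^ q).toReal
  refine isBoundedUnder_le_log_toReal_div hq₁ (C := (|b - a| + 1) * M) ?_
  filter_upwards [Ioo_mem_nhdsGT one_pos] with ε ⟨hε₀, hε₁⟩
  have hfloor : (⌊(b - a) / ε⌋₊ : ℝ) ≤ |b - a| / ε := by
    rcases le_or_gt 0 ((b - a) / ε) with h | h
    · exact (Nat.floor_le h).trans (by gcongr; exact le_abs_self _)
    · rw [Nat.floor_of_nonpos h.le, Nat.cast_zero]; positivity
  calc (fracIntegral μ q ε).toReal
      ≤ ((⌊(b - a) / ε⌋₊ + 1) * μ univ ^ q).toReal :=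
        toReal_mono (mul_ne_top (by simp) (rpow_ne_top_of_nonneg hq₀.le (measure_ne_top μ _)))
          (fracIntegral_le_of_measure_compl_Icc hq₀ hq₁.le hε₀ hμ)
    _ = (⌊(b - a) / ε⌋₊ + 1) * M := by norm_num [M, toReal_mul, toReal_add]
    _ ≤ (|b - a| / ε + 1 / ε) * M := by
        gcongr
        rw [le_div_iff₀ hε₀]; linarith
    _ = (|b - a| + 1) * M / ε := by ring

theorem sum_smul_dirac_apply {α ι : Type*} [MeasurableSpace α] [MeasurableSingletonClass α]
    [Countable ι] (w : ι → ℝ≥0∞) (x : ι → α) (E : Set α) :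
    (Measure.sum fun i => w i • Measure.dirac (x i)) E = ∑' i, (x ⁻¹' E).indicator w i := by
  rw [Measure.sum_apply_of_countable]
  refine tsum_congr fun i => ?_
  by_cases h : x i ∈ E <;> simp [Measure.dirac_apply, h]

theorem fracIntegral_sum_smul_dirac {ι : Type*} [Countable ι] (w : ι → ℝ≥0∞) (x : ι → ℝ)
    (q : ℝ) {ε : ℝ} (hε : 0 < ε) :
    fracIntegral (Measure.sum fun i => w i • Measure.dirac (x i)) q ε =
      ∑' i, w i * (Measure.sum fun i => w i • Measure.dirac (x i))
        (Ioo (x i - ε) (x i + ε)) ^ (q - 1) := by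
  set μ := Measure.sum fun i => w i • Measure.dirac (x i)
  rw [fracIntegral, Measure.restrict_sum_of_countable, lintegral_sum_measure]
  refine tsum_congr fun i => ?_
  rw [Measure.restrict_smul, lintegral_smul_measure, setLIntegral_dirac, smul_eq_mul]
  rcases eq_or_ne (w i) 0 with hw | hw
  · simp [hw]
  -- the atom `x i` carries positive mass, so it lies in the domain of integration
  have hpos : 0 < μ (Ioo (x i - ε) (x i + ε)) := by
    refine (pos_iff_ne_zero.mpr hw).trans_le ?_
    rw [sum_smul_dirac_apply]
    refine le_trans ?_ (ENNReal.le_tsum i)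
    rw [indicator_of_mem (by simp [hε] : i ∈ x ⁻¹' Ioo (x i - ε) (x i + ε))]
  rw [if_pos (show x i ∈ {y | 0 < μ (Ioo (y - ε) (y + ε))} from hpos)]

namespace lp

variable {α E : Type*} [NormedAddCommGroup E] {p : ℝ≥0∞}

def indicator (A : Set α) (f : lp (fun _ : α => E) p) : lp (fun _ : α => E) p :=
  ⟨A.indicator f, (lp.memℓp f).mono' fun i => norm_indicator_le_norm_self f i⟩

theorem coe_indicator (A : Set α) (f : lp (fun _ : α => E) p) : ⇑(indicator A f) = A.indicator f :=
  rfl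

theorem lipschitzWith_indicator [Fact (1 ≤ p)] (A : Set α) :
    LipschitzWith 1 (indicator (E := E) (p := p) A) := by
  refine LipschitzWith.of_dist_le_mul fun f g => ?_
  rw [NNReal.coe_one, one_mul, dist_eq_norm, dist_eq_norm]
  refine lp.norm_mono (zero_lt_one.trans_le Fact.out).ne' fun i => ?_
  rw [lp.coeFn_sub, Pi.sub_apply, lp.coeFn_sub, Pi.sub_apply, coe_indicator, coe_indicator]
  by_cases hi : i ∈ A <;> simp [hi]

theorem ofReal_norm_sq_eq_tsum {E : α → Type*} [∀ i, NormedAddCommGroup (E i)] (f : lp E 2) :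
    ENNReal.ofReal (‖f‖ ^ 2) = ∑' i, ENNReal.ofReal (‖f i‖ ^ 2) := by
  have h := lp.hasSum_norm (by norm_num : 0 < (2 : ℝ≥0∞).toReal) f
  simp only [toReal_ofNat, Real.rpow_two] at h
  rw [← h.tsum_eq, ENNReal.ofReal_tsum_of_nonneg (fun _ => by positivity) h.summable]

end lp

namespace HIndex

theorem injective_toTriple : Function.Injective fun i : HIndex => (i.n, i.l, i.m) := by
  rintro ⟨⟩ ⟨⟩ h
  simp only [Prod.mk.injEq] at h
  obtain ⟨rfl, rfl, rfl⟩ := h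
  rfl

instance : Countable HIndex := injective_toTriple.countable

theorem finite_setOf_n_le (N : ℕ) : {i : HIndex | i.n ≤ N}.Finite := by
  refine ((finite_Icc ((0 : ℕ), (0 : ℕ), -(N : ℤ)) (N, N, N)).preimage
    injective_toTriple.injOn).subset ?_
  intro i (hi : i.n ≤ N)
  have := i.hl
  have := i.hm
  simp only [mem_preimage, mem_Icc, Prod.mk_le_mk]
  omega

def upTo (N : ℕ) : Finset HIndex := (finite_setOf_n_le N).toFinset

theorem mem_upTo {N : ℕ} {i : HIndex} : i ∈ upTo N ↔ i.n ≤ N := by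
  simp [upTo]

end HIndex

section Eigenvalues

variable {Λ : ℝ}

theorem lam_mem_Icc (hΛ : 0 ≤ Λ) (n : ℕ) : lam Λ n ∈ Icc (-Λ) 0 := by
  rw [lam, neg_div]
  refine ⟨neg_le_neg ?_, neg_nonpos.mpr (by positivity)⟩
  rcases n.eq_zero_or_pos with rfl | hn
  · simpa using hΛ
  · exact div_le_self hΛ (one_le_pow₀ (by exact_mod_cast hn))

theorem lam_neg (hΛ : 0 < Λ) {n : ℕ} (hn : 0 < n) : lam Λ n < 0 := by
  rw [lam]
  exact div_neg_of_neg_of_pos (neg_neg_of_pos hΛ) (by positivity)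

theorem lam_le_lam (hΛ : 0 ≤ Λ) {a b : ℕ} (ha : 0 < a) (hab : a ≤ b) : lam Λ a ≤ lam Λ b := by
  rw [lam, lam, neg_div, neg_div, neg_le_neg_iff]
  exact div_le_div_of_nonneg_left hΛ (by positivity) (by gcongr)

theorem tendsto_lam (Λ : ℝ) : Tendsto (lam Λ) atTop (𝓝 0) :=
  tendsto_const_nhds.div_atTop ((tendsto_pow_atTop two_ne_zero).comp tendsto_natCast_atTop_atTop)

end Eigenvalues

section SpectralMeasure

variable {Λ : ℝ}

theorem specMeasure_apply (ψ : Hspace) (E : Set ℝ) :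
    specMeasure Λ ψ E =
      ∑' i, ((fun i : HIndex => lam Λ i.n) ⁻¹' E).indicator (fun i => ENNReal.ofReal (‖ψ i‖ ^ 2)) i :=
  sum_smul_dirac_apply _ _ E

theorem specMeasure_apply_eq_norm_sq (ψ : Hspace) (E : Set ℝ) :
    specMeasure Λ ψ E =
      ENNReal.ofReal (‖lp.indicator ((fun i : HIndex => lam Λ i.n) ⁻¹' E) ψ‖ ^ 2) := by
  rw [specMeasure_apply, lp.ofReal_norm_sq_eq_tsum]
  refine tsum_congr fun i => ?_
  by_cases hi : lam Λ i.n ∈ E <;> simp [lp.coe_indicator, hi]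

instance (ψ : Hspace) : IsFiniteMeasure (specMeasure Λ ψ) :=
  ⟨by simp [specMeasure_apply_eq_norm_sq]⟩

theorem continuous_specMeasure_apply (E : Set ℝ) :
    Continuous fun ψ : Hspace => specMeasure Λ ψ E := by
  simp_rw [specMeasure_apply_eq_norm_sq]
  exact continuous_ofReal.comp ((lp.lipschitzWith_indicator _).continuous.norm.pow 2)

theorem ofReal_norm_sq_le_specMeasure (ψ : Hspace) {E : Set ℝ} {i : HIndex}
    (hi : lam Λ i.n ∈ E) : ENNReal.ofReal (‖ψ i‖ ^ 2) ≤ specMeasure Λ ψ E := by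
  rw [specMeasure_apply]
  exact (indicator_of_mem (s := (fun i : HIndex => lam Λ i.n) ⁻¹' E) hi _).symm.le.trans
    (ENNReal.le_tsum i)

theorem specMeasure_compl_Icc (hΛ : 0 ≤ Λ) (ψ : Hspace) : specMeasure Λ ψ (Icc (-Λ) 0)ᶜ = 0 := by
  rw [specMeasure_apply]
  exact ENNReal.tsum_eq_zero.mpr fun i =>
    indicator_of_notMem (s := (fun i : HIndex => lam Λ i.n) ⁻¹' (Icc (-Λ) 0)ᶜ)
      (not_not_intro (lam_mem_Icc hΛ i.n)) _

theorem fracIntegral_specMeasure (q : ℝ) {ε : ℝ} (hε : 0 < ε) (ψ : Hspace) :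
    fracIntegral (specMeasure Λ ψ) q ε = ∑' i, ENNReal.ofReal (‖ψ i‖ ^ 2) *
      specMeasure Λ ψ (Ioo (lam Λ i.n - ε) (lam Λ i.n + ε)) ^ (q - 1) :=
  fracIntegral_sum_smul_dirac _ _ q hε

theorem tendsto_specMeasure_Ico_lam (hΛ : 0 < Λ) (ψ : Hspace) :
    Tendsto (fun N : ℕ => specMeasure Λ ψ (Ico (lam Λ (N + 1)) 0)) atTop (𝓝 0) := by
  have hlam := (tendsto_lam Λ).comp (tendsto_add_atTop_nat 1)
  have hanti : Antitone fun N : ℕ => Ico (lam Λ (N + 1)) 0 := fun a b hab =>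
    Ico_subset_Ico_left (lam_le_lam hΛ.le a.succ_pos (by omega))
  have hempty : ⋂ N : ℕ, Ico (lam Λ (N + 1)) 0 = ∅ := by
    refine eq_empty_iff_forall_notMem.mpr fun x hx => ?_
    have hx₀ : x < 0 := (mem_iInter.mp hx 0).2
    obtain ⟨N, hN⟩ := (hlam.eventually (lt_mem_nhds hx₀)).exists
    exact (mem_iInter.mp hx N).1.not_gt hN
  simpa [hempty, Function.comp_def] using tendsto_measure_iInter_atTop
    (fun _ => measurableSet_Ico.nullMeasurableSet) hanti ⟨0, measure_ne_top _ _⟩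

end SpectralMeasure

section UpperApproximation

variable {Λ q ε : ℝ}

/-- The levels `n > N` enter as a single atom of mass `μ_ψ([λ_{N+1}, 0))`. -/
def fracIntegralUpper (Λ q ε : ℝ) (N : ℕ) (ψ : Hspace) : ℝ≥0∞ :=
  (∑ i ∈ HIndex.upTo N, ENNReal.ofReal (‖ψ i‖ ^ 2) *
      specMeasure Λ ψ (Ioo (lam Λ i.n - ε) (lam Λ i.n + ε)) ^ (q - 1)) +
    specMeasure Λ ψ (Ico (lam Λ (N + 1)) 0) ^ q

theorem continuous_fracIntegralUpper (hq : 0 < q) (hε : 0 < ε) (N : ℕ) :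
    Continuous (fracIntegralUpper Λ q ε N) := by
  refine (continuous_finsetSum _ fun i _ => ?_).add
    (ENNReal.continuous_rpow_const.comp (continuous_specMeasure_apply _))
  have hcoord : Continuous fun ψ : Hspace => ENNReal.ofReal (‖ψ i‖ ^ 2) :=
    continuous_ofReal.comp
      (((continuous_apply i).comp lp.uniformContinuous_coe.continuous).norm.pow 2)
  exact ENNReal.continuous_mul_rpow_of_le hcoord (continuous_specMeasure_apply _)
    (fun ψ => ofReal_norm_sq_le_specMeasure ψ (by simp [hε]))
    (fun ψ => measure_ne_top _ _) (by linarith)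

theorem fracIntegral_le_fracIntegralUpper (hΛ : 0 < Λ) (hq₀ : 0 < q) (hq₁ : q ≤ 1)
    (hε : 0 < ε) {N : ℕ} (hN : -ε ≤ lam Λ (N + 1)) (ψ : Hspace) :
    fracIntegral (specMeasure Λ ψ) q ε ≤ fracIntegralUpper Λ q ε N ψ := by
  set μ := specMeasure Λ ψ
  set T := Ico (lam Λ (N + 1)) 0
  set w : HIndex → ℝ≥0∞ := fun i => ENNReal.ofReal (‖ψ i‖ ^ 2)
  have hT (i : HIndex) (hi : i ∉ HIndex.upTo N) : lam Λ i.n ∈ T := by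
    rw [HIndex.mem_upTo, not_le] at hi
    exact ⟨lam_le_lam hΛ.le N.succ_pos hi, lam_neg hΛ i.hn⟩
  have hball (i : HIndex) (hi : i ∉ HIndex.upTo N) : T ⊆ Ioo (lam Λ i.n - ε) (lam Λ i.n + ε) :=
    fun y ⟨hy₁, hy₂⟩ => by
      have := hT i hi
      simp only [T, mem_Ico] at this
      constructor <;> linarith
  have hmass : ∑' i : ↥(HIndex.upTo N : Set HIndex)ᶜ, w i ≤ μ T := by
    rw [tsum_subtype, specMeasure_apply]
    exact ENNReal.tsum_le_tsum
      (indicator_le_indicator_of_subset (fun i hi => hT i hi) (fun _ => zero_le))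
  have htail : ∑' i : ↥(HIndex.upTo N : Set HIndex)ᶜ,
      w i * μ (Ioo (lam Λ (i : HIndex).n - ε) (lam Λ (i : HIndex).n + ε)) ^ (q - 1) ≤ μ T ^ q :=
    calc _ ≤ ∑' i : ↥(HIndex.upTo N : Set HIndex)ᶜ, w i * μ T ^ (q - 1) :=
          ENNReal.tsum_le_tsum fun i => by
            gcongr w i * ?_
            exact rpow_le_rpow_of_nonpos (by linarith) (measure_mono (hball i i.2))
      _ = (∑' i : ↥(HIndex.upTo N : Set HIndex)ᶜ, w i) * μ T ^ (q - 1) := ENNReal.tsum_mul_right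
      _ ≤ μ T * μ T ^ (q - 1) := by gcongr
      _ ≤ μ T ^ q := mul_rpow_sub_one_le hq₀
  rw [fracIntegral_specMeasure q hε, ← ENNReal.sum_add_tsum_compl (HIndex.upTo N)]
  exact add_le_add_right htail _

theorem fracIntegralUpper_le (hε : 0 < ε) (N : ℕ) (ψ : Hspace) :
    fracIntegralUpper Λ q ε N ψ ≤
      fracIntegral (specMeasure Λ ψ) q ε + specMeasure Λ ψ (Ico (lam Λ (N + 1)) 0) ^ q := by
  rw [fracIntegralUpper, fracIntegral_specMeasure q hε]
  gcongr
  exact ENNReal.sum_le_tsum _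

theorem upperSemicontinuous_fracIntegral_specMeasure (hΛ : 0 < Λ) (hq₀ : 0 < q) (hq₁ : q ≤ 1)
    (hε : 0 < ε) : UpperSemicontinuous fun ψ : Hspace => fracIntegral (specMeasure Λ ψ) q ε := by
  intro ψ t ht
  have htail : Tendsto (fun N : ℕ => fracIntegral (specMeasure Λ ψ) q ε +
      specMeasure Λ ψ (Ico (lam Λ (N + 1)) 0) ^ q) atTop
      (𝓝 (fracIntegral (specMeasure Λ ψ) q ε)) := by
    have := (tendsto_const_nhds (x := fracIntegral (specMeasure Λ ψ) q ε)).add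
      (((ENNReal.continuous_rpow_const (y := q)).tendsto 0).comp (tendsto_specMeasure_Ico_lam hΛ ψ))
    rwa [ENNReal.zero_rpow_of_pos hq₀, add_zero] at this
  have hlam : ∀ᶠ N : ℕ in atTop, -ε < lam Λ (N + 1) :=
    ((tendsto_lam Λ).comp (tendsto_add_atTop_nat 1)).eventually (lt_mem_nhds (by linarith))
  obtain ⟨N, hN, hNt⟩ := (hlam.and (htail.eventually (gt_mem_nhds ht))).exists
  have hU : fracIntegralUpper Λ q ε N ψ < t := (fracIntegralUpper_le hε N ψ).trans_lt hNt
  filter_upwards [(continuous_fracIntegralUpper hq₀ hε N).tendsto ψ |>.eventually (gt_mem_nhds hU)]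
    with φ hφ
  exact (fracIntegral_le_fracIntegralUpper hΛ hq₀ hq₁ hε hN.le φ).trans_lt hφ

end UpperApproximation

theorem hydrogen_Gdelta_lower (Λ : ℝ) (hΛ : 0 < Λ)
    (q : ℝ) (hq : q ∈ Ioo (0 : ℝ) 1) (γ : ℝ) (hγ : γ ∈ Icc (0 : ℝ) 1) :
    IsGδ {ψ : Hspace | Dlower (specMeasure Λ ψ) q ≤ γ} := by
  obtain ⟨hq₀, hq₁⟩ := hq
  have hsupp (ψ : Hspace) := specMeasure_compl_Icc hΛ.le ψ
  refine isGδ_setOf_liminf_le (u := fun ψ => fracQuotient (specMeasure Λ ψ) q) hγ.1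
    (fun ψ => isBoundedUnder_le_fracQuotient hq₀ hq₁ (hsupp ψ)) fun c hc => ?_
  filter_upwards [Ioo_mem_nhdsGT one_pos] with ε ⟨hε₀, hε₁⟩
  exact isOpen_setOf_log_toReal_div_lt
    (upperSemicontinuous_fracIntegral_specMeasure hΛ hq₀ hq₁.le hε₀)
    (fun ψ => fracIntegral_ne_top hq₀ hq₁.le hε₀ (hsupp ψ)) (hγ.1.trans_lt hc)
    (mul_pos_of_neg_of_neg (by linarith) (Real.log_neg hε₀ hε₁))
end
end

section
/- Fix Λ > 0, λ_n = −Λ/n², j ∈ ℕ, and q ∈ (0,1) with j > q/(1−q). Let μ_j = Σ_{n≥1} n^{−(1+1/j)} δ_{λ_n} and, for N ∈ ℕ, set ε_N = (λ_{N+1} − λ_N)/2. Then for every N ≥ 1: I_{μ_j}(q, ε_N) ≥ Σ_{n=1}^N n^{−(1+1/j)q} ≥ ( N^{1−(1+1/j)q} − 1 ) / ( 1 − (1+1/j)q ). -/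
/-!
At the gap scale `ε_N` every atom `λ_n` with `n ≤ N` is isolated: the gaps `λ_{n+1} - λ_n` of the
hydrogen spectrum decrease, so `B(λ_n, ε_N)` contains no other atom and has mass
`w_n = n^{-(1+1/j)}`. Restricting the integral to these atoms gives `∑ w_n · w_n^{q-1} = ∑ w_n^q`.
The second bound compares the sum with `∫_1^N x^{-s} dx` for the decreasing function `x^{-s}`,
where `s = (1 + 1/j) q < 1` is exactly the condition `j > q / (1 - q)`.
-/

open MeasureTheory Filter Set Topology ENNReal

noncomputable section

lemma one_add_one_div_mul_lt_one {q j : ℝ} (hq0 : 0 ≤ q) (hq1 : q < 1) (hj : q / (1 - q) < j) :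
    (1 + 1 / j) * q < 1 := by
  have h1q : 0 < 1 - q := by linarith
  have hj0 : 0 < j := (div_nonneg hq0 h1q.le).trans_lt hj
  have hqj : q < j * (1 - q) := (div_lt_iff₀ h1q).mp hj
  have : q / j < 1 - q := (div_lt_iff₀ hj0).mpr (by linarith)
  calc (1 + 1 / j) * q = q + q / j := by ring
    _ < 1 := by linarith

lemma sub_one_div_le_sum_Icc_rpow_neg {s : ℝ} (hs0 : 0 ≤ s) (hs1 : s ≠ 1) {N : ℕ} (hN : 1 ≤ N) :
    ((N : ℝ) ^ (1 - s) - 1) / (1 - s) ≤ ∑ n ∈ Finset.Icc 1 N, (n : ℝ) ^ (-s) := by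
  have hanti : AntitoneOn (fun x : ℝ => x ^ (-s)) (Icc (1 : ℕ) N) := fun a ha b _ hab =>
    Real.rpow_le_rpow_of_nonpos (by rw [Nat.cast_one] at ha; linarith [ha.1]) hab (by linarith)
  have hint : ∫ x in (1 : ℝ)..N, x ^ (-s) = ((N : ℝ) ^ (1 - s) - 1) / (1 - s) := by
    rw [integral_rpow (Or.inr ⟨by contrapose! hs1; linarith, ?_⟩)]
    · rw [Real.one_rpow, neg_add_eq_sub]
    · rw [uIcc_of_le (by exact_mod_cast hN)]
      exact fun h => absurd h.1 (by norm_num)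
  calc ((N : ℝ) ^ (1 - s) - 1) / (1 - s) = ∫ x in (1 : ℕ)..(N : ℕ), (x : ℝ) ^ (-s) := by
        rw [← hint, Nat.cast_one]
    _ ≤ ∑ n ∈ Finset.Ico 1 N, (n : ℝ) ^ (-s) := hanti.integral_le_sum_Ico hN
    _ ≤ ∑ n ∈ Finset.Icc 1 N, (n : ℝ) ^ (-s) :=
        Finset.sum_le_sum_of_subset_of_nonneg Finset.Ico_subset_Icc_self
          fun n _ _ => by positivity

lemma le_abs_sub_of_antitone_gaps {x : ℕ → ℝ} (hx : StrictMono x)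
    (hgap : Antitone fun n => x (n + 1) - x n) {k m M : ℕ} (hm : m ≤ M) (hkm : k ≠ m) :
    x (M + 1) - x M ≤ |x k - x m| := by
  rcases lt_or_gt_of_ne hkm with hlt | hgt
  · obtain ⟨i, rfl⟩ : ∃ i, m = i + 1 := ⟨m - 1, by omega⟩
    calc x (M + 1) - x M ≤ x (i + 1) - x i := hgap (by omega)
      _ ≤ x (i + 1) - x k := by linarith [hx.monotone (show k ≤ i by omega)]
      _ ≤ |x k - x (i + 1)| := by rw [abs_sub_comm]; exact le_abs_self _
  · calc x (M + 1) - x M ≤ x (m + 1) - x m := hgap hm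
      _ ≤ x k - x m := by linarith [hx.monotone (show m + 1 ≤ k by omega)]
      _ ≤ |x k - x m| := le_abs_self _

lemma MeasureTheory.Measure.sum_smul_dirac_apply_of_unique {ι X : Type*} [MeasurableSpace X]
    (c : ι → ℝ≥0∞) (x : ι → X) {A : Set X} (hA : MeasurableSet A) {i : ι} (hi : x i ∈ A)
    (hunique : ∀ k, x k ∈ A → k = i) :
    Measure.sum (fun k => c k • Measure.dirac (x k)) A = c i := by
  rw [Measure.sum_apply _ hA, tsum_eq_single i fun k hk => ?_]
  · simp [Measure.dirac_apply' _ hA, hi]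
  · simp [Measure.dirac_apply' _ hA, show x k ∉ A from fun h => hk (hunique k h)]

lemma sum_rpow_le_fracIntegral {ι : Type*} (μ : Measure ℝ) (q ε : ℝ) (t : Finset ι) (x : ι → ℝ)
    (hinj : Set.InjOn x t) (hiso : ∀ i ∈ t, μ (Ioo (x i - ε) (x i + ε)) = μ {x i})
    (hpos : ∀ i ∈ t, μ {x i} ≠ 0) (hfin : ∀ i ∈ t, μ {x i} ≠ ∞) :
    ∑ i ∈ t, μ {x i} ^ q ≤ fracIntegral μ q ε := by
  classical
  have hsub : ↑(t.image x) ⊆ {y : ℝ | 0 < μ (Ioo (y - ε) (y + ε))} := by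
    intro y hy
    obtain ⟨i, hi, rfl⟩ := Finset.mem_image.mp hy
    simp only [mem_ofPred_eq, hiso i hi, pos_iff_ne_zero]
    exact hpos i hi
  calc ∑ i ∈ t, μ {x i} ^ q
      = ∑ i ∈ t, μ (Ioo (x i - ε) (x i + ε)) ^ (q - 1) * μ {x i} :=
        Finset.sum_congr rfl fun i hi => by
          rw [hiso i hi, ENNReal.rpow_sub _ _ (hpos i hi) (hfin i hi), ENNReal.rpow_one,
            ENNReal.div_mul_cancel (hpos i hi) (hfin i hi)]
    _ = ∫⁻ y in ↑(t.image x), μ (Ioo (y - ε) (y + ε)) ^ (q - 1) ∂μ := by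
        rw [lintegral_finset, Finset.sum_image hinj]
    _ ≤ fracIntegral μ q ε := lintegral_mono_set hsub

lemma sum_rpow_le_fracIntegral_sum_dirac {x : ℕ → ℝ} (hx : StrictMono x)
    (hgap : Antitone fun n => x (n + 1) - x n) (c : ℕ → ℝ≥0∞) (hc0 : ∀ n, c n ≠ 0)
    (hc : ∀ n, c n ≠ ∞) (q : ℝ) (M : ℕ) :
    ∑ n ∈ Finset.range (M + 1), c n ^ q ≤
      fracIntegral (Measure.sum fun n => c n • Measure.dirac (x n)) q ((x (M + 1) - x M) / 2) := by
  generalize hε_def : (x (M + 1) - x M) / 2 = ε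
  have hε : 0 < ε := by linarith [hx (Nat.lt_succ_self M)]
  have hatom : ∀ m, Measure.sum (fun n => c n • Measure.dirac (x n)) {x m} = c m := fun m =>
    Measure.sum_smul_dirac_apply_of_unique c x (measurableSet_singleton _) rfl
      fun k hk => hx.injective hk
  have hball : ∀ m ∈ Finset.range (M + 1),
      Measure.sum (fun n => c n • Measure.dirac (x n)) (Ioo (x m - ε) (x m + ε)) = c m := by
    intro m hm
    refine Measure.sum_smul_dirac_apply_of_unique c x measurableSet_Ioo
      ⟨by linarith, by linarith⟩ fun k hk => ?_
    by_contra hkm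
    have hdist := le_abs_sub_of_antitone_gaps hx hgap (Finset.mem_range_succ_iff.mp hm) hkm
    have hclose : |x k - x m| < ε := abs_sub_lt_iff.mpr ⟨by linarith [hk.2], by linarith [hk.1]⟩
    linarith
  simpa only [hatom] using sum_rpow_le_fracIntegral _ q ε _ x hx.injective.injOn
    (fun m hm => (hball m hm).trans (hatom m).symm) (fun m _ => (hatom m).trans_ne (hc0 m))
    (fun m _ => (hatom m).trans_ne (hc m))

lemma lam_succ_strictMono {Λ : ℝ} (hΛ : 0 < Λ) : StrictMono fun n : ℕ => lam Λ (n + 1) := by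
  refine strictMono_nat_of_lt_succ fun n => ?_
  simp only [lam, neg_div, neg_lt_neg_iff]
  push_cast
  exact div_lt_div_of_pos_left hΛ (by positivity) (by gcongr; linarith)

lemma lam_succ_gap_antitone {Λ : ℝ} (hΛ : 0 < Λ) :
    Antitone fun n : ℕ => lam Λ (n + 1 + 1) - lam Λ (n + 1) := by
  refine antitone_nat_of_succ_le fun n => ?_
  simp only [lam]
  push_cast
  have hconv : ∀ a : ℝ, 0 < a → 2 / (a + 1) ^ 2 ≤ 1 / a ^ 2 + 1 / (a + 2) ^ 2 := by
    intro a ha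
    rw [div_add_div _ _ (by positivity) (by positivity), div_le_div_iff₀ (by positivity)
      (by positivity)]
    nlinarith [sq_nonneg a, mul_pos ha ha, pow_pos ha 3, pow_pos ha 4]
  have := mul_le_mul_of_nonneg_left (hconv ((n : ℝ) + 1) (by positivity)) hΛ.le
  ring_nf at this ⊢
  linarith

theorem hydrogen_fracIntegral_lower_bound_at_gap_scale
    (Λ : ℝ) (hΛ : 0 < Λ) (j : ℕ) (q : ℝ) (hq : q ∈ Ioo (0 : ℝ) 1)
    (hj : q / (1 - q) < (j : ℝ))
    (μj : Measure ℝ)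
    (hμ : μj = Measure.sum fun n : ℕ =>
      ENNReal.ofReal (((n + 1 : ℕ) : ℝ) ^ (-(1 + 1 / (j : ℝ)))) •
        Measure.dirac (lam Λ (n + 1)))
    (N : ℕ) (hN : 1 ≤ N) (εN : ℝ) (hεN : εN = (lam Λ (N + 1) - lam Λ N) / 2) :
    ENNReal.ofReal (∑ n ∈ Finset.Icc 1 N, ((n : ℝ) ^ (-(1 + 1 / (j : ℝ)) * q))) ≤
        fracIntegral μj q εN ∧
      ((N : ℝ) ^ (1 - (1 + 1 / (j : ℝ)) * q) - 1) / (1 - (1 + 1 / (j : ℝ)) * q) ≤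
        ∑ n ∈ Finset.Icc 1 N, ((n : ℝ) ^ (-(1 + 1 / (j : ℝ)) * q)) := by
  have hexp_lt_one : (1 + 1 / (j : ℝ)) * q < 1 := one_add_one_div_mul_lt_one hq.1.le hq.2 hj
  refine ⟨?_, by
    simpa only [neg_mul] using sub_one_div_le_sum_Icc_rpow_neg
      (mul_nonneg (by positivity) hq.1.le) hexp_lt_one.ne hN⟩
  obtain ⟨M, rfl⟩ : ∃ M, N = M + 1 := ⟨N - 1, by omega⟩
  subst hμ hεN
  have hsum : ENNReal.ofReal (∑ n ∈ Finset.Icc 1 (M + 1), (n : ℝ) ^ (-(1 + 1 / (j : ℝ)) * q)) =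
      ∑ n ∈ Finset.range (M + 1),
        ENNReal.ofReal (((n + 1 : ℕ) : ℝ) ^ (-(1 + 1 / (j : ℝ)))) ^ q := by
    rw [ENNReal.ofReal_sum_of_nonneg fun n _ => by positivity, Finset.range_eq_Ico,
      Finset.sum_Ico_add' (fun n : ℕ => ENNReal.ofReal ((n : ℝ) ^ (-(1 + 1 / (j : ℝ)))) ^ q),
      zero_add, Finset.Ico_add_one_right_eq_Icc]
    refine Finset.sum_congr rfl fun n hn => ?_
    have hn0 : (0 : ℝ) < n := by exact_mod_cast (Finset.mem_Icc.mp hn).1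
    rw [ENNReal.ofReal_rpow_of_pos (by positivity), ← Real.rpow_mul hn0.le]
  rw [hsum]
  exact sum_rpow_le_fracIntegral_sum_dirac (lam_succ_strictMono hΛ) (lam_succ_gap_antitone hΛ)
    _ (fun n => ENNReal.ofReal_ne_zero_iff.mpr (by positivity)) (fun _ => ENNReal.ofReal_ne_top) q M
end
end
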